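/- arXiv:0711.4220 — 3 statements merged into one kernel-verified Lean document; each statement's English description precedes it below -/
import Mathlib

section
/- Let k ≥ 1 and ℓ ∈ {0,1} be integers, a, b, c, d ∈ {0,1}, and let τ₁, τ₂ be complex numbers such that the symmetric matrix τ = [[τ₁, τ₂],[τ₂, kτ₁ + ℓτ₂]] has positive definite imaginary part. Set p = exp(2πi(τ₁ − τ₂)/8) and q = exp(2πiτ₂/8). Then θ_{abcd}(τ) = i^{ac+bd} · Σ_{(x₁,x₂)∈ℤ²} (−1)^{x₁c + x₂d} · p^{(2x₁+a)² + k(2x₂+b)²} · q^{(2x₁+a+2x₂+b)² + (k+ℓ−1)(2x₂+b)²}, where now both exponents are nonnegative integers. -/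
open Complex Matrix

/-- The classical theta constant of half-integral characteristic `(a, b; c, d)`. -/
noncomputable def thetaConst (a b c d : ℕ) (τ : Matrix (Fin 2) (Fin 2) ℂ) : ℂ :=
  ∑' x : ℤ × ℤ,
    Complex.exp (2 * Real.pi * Complex.I *
      ((1 / 2) * (![(x.1 : ℂ) + a / 2, (x.2 : ℂ) + b / 2] ⬝ᵥ
          τ.mulVec ![(x.1 : ℂ) + a / 2, (x.2 : ℂ) + b / 2]) +
        ![(x.1 : ℂ) + a / 2, (x.2 : ℂ) + b / 2] ⬝ᵥ ![(c : ℂ) / 2, (d : ℂ) / 2]))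

/-- the Fourier expansion of θ_{abcd} restricted to the Humbert surface of
discriminant Δ = 4k + ℓ after the substitution r = pq, in the variables
p = e^{2πi(τ₁ - τ₂)/8}, q = e^{2πiτ₂/8}; both exponents are nonnegative. -/
theorem theta_fourier_expansion_on_humbert_pq
    (k ℓ : ℤ) (hk : 1 ≤ k) (hℓ : ℓ = 0 ∨ ℓ = 1)
    (a b c d : ℕ) (ha : a = 0 ∨ a = 1) (hb : b = 0 ∨ b = 1)
    (hc : c = 0 ∨ c = 1) (hd : d = 0 ∨ d = 1)
    (τ₁ τ₂ : ℂ)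
    (hpos : (Matrix.of fun i j =>
      ((!![τ₁, τ₂; τ₂, (k : ℂ) * τ₁ + (ℓ : ℂ) * τ₂]) i j).im).PosDef)
    (p q : ℂ)
    (hp : p = Complex.exp (2 * Real.pi * Complex.I * (τ₁ - τ₂) / 8))
    (hq : q = Complex.exp (2 * Real.pi * Complex.I * τ₂ / 8)) :
    thetaConst a b c d !![τ₁, τ₂; τ₂, (k : ℂ) * τ₁ + (ℓ : ℂ) * τ₂] =
      Complex.I ^ (a * c + b * d) *
        ∑' x : ℤ × ℤ,
          (-1 : ℂ) ^ (x.1 * (c : ℤ) + x.2 * (d : ℤ)) *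
            p ^ ((2 * x.1 + (a : ℤ)) ^ 2 + k * (2 * x.2 + (b : ℤ)) ^ 2) *
            q ^ ((2 * x.1 + (a : ℤ) + 2 * x.2 + (b : ℤ)) ^ 2 +
              (k + ℓ - 1) * (2 * x.2 + (b : ℤ)) ^ 2) := by
  subst hp hq
  rw [thetaConst, ← tsum_mul_left]
  refine tsum_congr fun x => ?_
  have hI : Complex.I = Complex.exp (Real.pi * Complex.I / 2) := by
    have h2 : (Real.pi : ℂ) * Complex.I / 2 = (↑(Real.pi / 2) : ℂ) * Complex.I := by
      push_cast; ring
    rw [h2, Complex.exp_mul_I, ← Complex.ofReal_cos, ← Complex.ofReal_sin]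
    simp
  have hIpow : Complex.I ^ (a * c + b * d) =
      Complex.exp ((a * c + b * d : ℕ) * (Real.pi * Complex.I / 2)) := by
    conv_lhs => rw [hI]
    rw [← Complex.exp_nat_mul]
  rw [hIpow,
    show (-1 : ℂ) = Complex.exp (Real.pi * Complex.I) from Complex.exp_pi_mul_I.symm,
    ← Complex.exp_int_mul, ← Complex.exp_int_mul, ← Complex.exp_int_mul,
    ← Complex.exp_add, ← Complex.exp_add, ← Complex.exp_add]
  congr 1
  simp [Matrix.mulVec, dotProduct, Fin.sum_univ_two]
  ring
end

section
/- Let k ≥ 1 and ℓ ∈ {0,1} be integers. Then the set of (x₁,x₂) ∈ ℤ² with (2x₁+1)² + k(2x₂+1)² = 1 + k and (2x₁+2x₂+2)² + (k+ℓ−1)(2x₂+1)² = k + ℓ − 1 is exactly {(−1,0), (0,−1)}. Consequently, the coefficient of p^{1+k} q^{k+ℓ−1} in the restricted Fourier expansion is Σ over this set of (−1)^{x₁c+x₂d}, which equals 2 for (c,d) = (0,0) (the expansion of ϑ₈ = θ₁₁₀₀) and equals −2 for (c,d) = (1,1) (the expansion of ϑ₁₀ = θ₁₁₁₁). -/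
/-- for characteristic a = b = 1, the lattice points achieving the minimal
exponents (1 + k, k + ℓ − 1) are exactly (−1, 0) and (0, −1); consequently the coefficient
of p^{1+k} q^{k+ℓ−1} is 2 for ϑ₈ (where (c,d) = (0,0)) and −2 for ϑ₁₀ (where (c,d) = (1,1)). -/
theorem humbert_fourier_lowest_coefficient_odd
    (k ℓ : ℤ) (hk : 1 ≤ k) (hℓ : ℓ = 0 ∨ ℓ = 1) :
    {x : ℤ × ℤ | (2 * x.1 + 1) ^ 2 + k * (2 * x.2 + 1) ^ 2 = 1 + k ∧
        (2 * x.1 + 2 * x.2 + 2) ^ 2 + (k + ℓ - 1) * (2 * x.2 + 1) ^ 2 = k + ℓ - 1} =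
      {((-1 : ℤ), (0 : ℤ)), ((0 : ℤ), (-1 : ℤ))} ∧
    (∑ x ∈ ({((-1 : ℤ), (0 : ℤ)), ((0 : ℤ), (-1 : ℤ))} : Finset (ℤ × ℤ)),
        (-1 : ℂ) ^ (x.1 * (0 : ℤ) + x.2 * (0 : ℤ)) = 2) ∧
    (∑ x ∈ ({((-1 : ℤ), (0 : ℤ)), ((0 : ℤ), (-1 : ℤ))} : Finset (ℤ × ℤ)),
        (-1 : ℂ) ^ (x.1 * (1 : ℤ) + x.2 * (1 : ℤ)) = -2) := by
  refine ⟨?_, ?_, ?_⟩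
  · ext ⟨x₁, x₂⟩
    simp only [Set.mem_setOf_eq, Set.mem_insert_iff, Set.mem_singleton_iff, Prod.mk.injEq]
    constructor
    · rintro ⟨h1, h2⟩
      have hb1 : 1 ≤ (2 * x₂ + 1) ^ 2 := by
        rcases le_or_gt 0 x₂ with h | h <;> nlinarith
      have ha1 : 1 ≤ (2 * x₁ + 1) ^ 2 := by
        rcases le_or_gt 0 x₁ with h | h <;> nlinarith
      have hb : (2 * x₂ + 1) ^ 2 = 1 := by nlinarith
      have ha : (2 * x₁ + 1) ^ 2 = 1 := by nlinarith
      have hz : (2 * x₁ + 2 * x₂ + 2) ^ 2 = 0 := by rw [hb] at h2; linarith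
      have hz' : 2 * x₁ + 2 * x₂ + 2 = 0 := by
        exact pow_eq_zero_iff (by norm_num) |>.mp hz
      have hb' : (2 * x₂ + 1 - 1) * (2 * x₂ + 1 + 1) = 0 := by nlinarith
      rcases mul_eq_zero.mp hb' with h | h
      · left; omega
      · right; omega
    · rintro (⟨h1, h2⟩ | ⟨h1, h2⟩) <;> subst h1 <;> subst h2 <;> constructor <;> ring
  · norm_num
  · norm_num [Finset.sum_insert, Prod.ext_iff]
end

section
/- In the symmetric group on 6 letters {0, 1, 2, 3, 4, 5} (Equiv.Perm (Fin 6)), the subgroup generated by the four permutations given in cycle notation by (0 3)(1 4)(2 5), (1 2), (3 4), and (4 5) has order 72. -/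
/-!
The group is the wreath product `S₃ ≀ C₂` of the blocks `{0, 1, 2}` and `{3, 4, 5}`, of order
`2 · 3! · 3! = 72`. The order can be read off by saturation: in a group, a finite set containing
`1` and stable under left multiplication by the elements of `S` contains the subgroup generated by
`S`, so iterating `T ↦ T ∪ S * T` from `{1}` until it stabilises enumerates that subgroup. Here it
stabilises after 8 steps, with 72 elements.
-/

open Pointwise

section ClosureSaturation

variable {G : Type*} [Group G] [DecidableEq G]

def closureStep (S T : Finset G) : Finset G := T ∪ S * T

lemma one_mem_iterate_closureStep (S : Finset G) (n : ℕ) : (1 : G) ∈ (closureStep S)^[n] {1} := by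
  induction n with
  | zero => exact Finset.mem_singleton_self 1
  | succ n ih => exact Function.iterate_succ_apply' .. ▸ Finset.mem_union_left _ ih

lemma coe_iterate_closureStep_subset_closure (S : Finset G) (n : ℕ) :
    (((closureStep S)^[n] {1} : Finset G) : Set G) ⊆ Subgroup.closure (S : Set G) := by
  induction n with
  | zero => simp
  | succ n ih =>
    rw [Function.iterate_succ_apply', closureStep, Finset.coe_union, Finset.coe_mul,
      Set.union_subset_iff, Set.mul_subset_iff]
    exact ⟨ih, fun x hx y hy => mul_mem (Subgroup.subset_closure hx) (ih hy)⟩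

lemma inv_mul_mem_of_mul_subset {S T : Finset G} (hS : S * T ⊆ T) {s y : G} (hs : s ∈ S)
    (hy : y ∈ T) : s⁻¹ * y ∈ T := by
  -- Left multiplication by `s` is injective, so it maps the finite set `T` onto itself.
  have hsT : s • T = T :=
    Finset.eq_of_subset_of_card_le ((Finset.smul_finset_subset_smul hs).trans hS)
      (Finset.card_smul_finset s T).ge
  exact Finset.inv_smul_mem_iff.2 (hsT ▸ hy)

lemma closure_subset_of_mul_subset {S T : Finset G} (h1 : 1 ∈ T) (hS : S * T ⊆ T) :
    (Subgroup.closure (S : Set G) : Set G) ⊆ T := fun x hx => by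
  induction hx using Subgroup.closure_induction_left with
  | one => exact h1
  | mul_left s hs y _ hy => exact Finset.mul_subset_iff.1 hS s hs y hy
  | inv_mul_cancel s hs y _ hy => exact inv_mul_mem_of_mul_subset hS hs hy

theorem card_closure_eq_card_iterate_closureStep (S : Finset G) (n : ℕ)
    (hS : S * (closureStep S)^[n] {1} ⊆ (closureStep S)^[n] {1}) :
    Nat.card (Subgroup.closure (S : Set G)) = ((closureStep S)^[n] {1}).card := by
  have hcoe : (Subgroup.closure (S : Set G) : Set G) = (closureStep S)^[n] {1} :=
    (closure_subset_of_mul_subset (one_mem_iterate_closureStep S n) hS).antisymm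
      (coe_iterate_closureStep_subset_closure S n)
  rw [← Nat.card_eq_finsetCard]
  exact Nat.card_congr (Equiv.setCongr hcoe)

end ClosureSaturation

/-- the subgroup of S₆ generated by (0 3)(1 4)(2 5), (1 2), (3 4) and (4 5)
(the fixed group of a Humbert component of discriminant Δ ≡ 1 mod 8, Δ ≠ 1) has order 72. -/
theorem humbert_fixed_group_one_mod_eight_order :
    Nat.card (Subgroup.closure
      ({c[0, 3] * c[1, 4] * c[2, 5], c[1, 2], c[3, 4], c[4, 5]} :
        Set (Equiv.Perm (Fin 6)))) = 72 := by
  have h := card_closure_eq_card_iterate_closureStep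
    ({c[0, 3] * c[1, 4] * c[2, 5], c[1, 2], c[3, 4], c[4, 5]} : Finset (Equiv.Perm (Fin 6))) 8
    (by decide +kernel)
  push_cast at h
  rw [h]
  decide +kernel
end
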